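/- Let 1 ≤ T < t_0 ≤ ∞, let I = [T, t_0), and for t ∈ I let J = [t, ∞) ∩ I. Let h ∈ C([1,∞), ℝ^+) be such that for some λ > 0 the function t^λ h(t) is nonincreasing and tends to zero at infinity. Let 1 ≤ q, q_k ≤ ∞ (1 ≤ k ≤ n) be such that μ := 1/q − Σ_k 1/q_k ≥ 0. Let f_k ∈ L^{q_k}(I) satisfy ‖f_k; L^{q_k}(J)‖ ≤ N_k h(t) for 1 ≤ k ≤ n, for some constants N_k and all t ∈ I. Let ρ ≥ 0 be such that nλ + ρ > μ. Then for all t ∈ I, ‖(Π_k f_k) t^{-ρ}; L^q(J)‖ ≤ C (Π_k N_k) h(t)^n t^{μ−ρ}, where C = (1 − 2^{−q(nλ+ρ−μ)})^{−1/q}. -/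

import Mathlib

/-!
Cut `J = [t, ∞) ∩ I` into the dyadic blocks `[2ʲt, 2ʲ⁺¹t) ∩ I`. On a block, Hölder's inequality
with the weight `s^(-ρ)` taken in `L^(1/μ)` (the block has length `2ʲt`) together with the decay
`h(2ʲt) ≤ 2^(-jλ) h(t)`, which comes from the monotonicity of `t^λ h(t)`, bounds the norm of the
product by `2^(-jσ) (∏ₖ Nₖ) h(t)ⁿ t^(μ-ρ)` with `σ = nλ + ρ - μ > 0`. Summing the `q`-th powers of
this geometric sequence gives the constant `(1 - 2^(-qσ))^(-1/q)`.
-/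

open MeasureTheory Filter FourierTransform Real Set
open scoped ENNReal

noncomputable section

abbrev Rn (n : ℕ) : Type := EuclideanSpace ℝ (Fin n)

namespace Zakharov

variable {n : ℕ}

/-- Complexification of a real-valued function. -/
def cplx (f : Rn n → ℝ) : Rn n → ℂ := fun x => (f x : ℂ)

/-- Fourier multiplier operator. -/
def fmul (m : Rn n → ℂ) (f : Rn n → ℂ) : Rn n → ℂ :=
  𝓕⁻ fun ξ => m ξ * 𝓕 f ξ

/-- Fractional power `ω^s` of `ω = (-Δ)^{1/2}`. -/
def omegaPow (s : ℝ) (f : Rn n → ℂ) : Rn n → ℂ :=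
  fmul (fun ξ => (((2 * π * ‖ξ‖) ^ s : ℝ) : ℂ)) f

/-- Inverse Laplacian `Δ⁻¹ = -ω⁻²`. -/
def invLap (f : Rn n → ℂ) : Rn n → ℂ :=
  fmul (fun ξ => ((-(((2 * π * ‖ξ‖) ^ (2 : ℕ))⁻¹) : ℝ) : ℂ)) f

/-- Free Schrödinger group `U(t) = exp(i(t/2)Δ)`. -/
def schrod (t : ℝ) (f : Rn n → ℂ) : Rn n → ℂ :=
  fmul (fun ξ => Complex.exp (-(Complex.I * (t : ℂ) * (((2 * π * ‖ξ‖) ^ (2 : ℕ) : ℝ) : ℂ)) / 2)) f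

/-- Solution `A₀(t) = cos(ωt)A₊ + ω⁻¹ sin(ωt) Ȧ₊` of the free wave equation. -/
def waveSol (Ap Adot : Rn n → ℝ) (t : ℝ) : Rn n → ℝ := fun x =>
  (fmul (fun ξ => ((Real.cos (2 * π * ‖ξ‖ * t) : ℝ) : ℂ)) (cplx Ap) x
    + fmul (fun ξ => ((Real.sin (2 * π * ‖ξ‖ * t) / (2 * π * ‖ξ‖) : ℝ) : ℂ)) (cplx Adot) x).re

/-- Pointwise time derivative `∂ₜ`. -/
def dt {α : Type*} {E : Type*} [NormedAddCommGroup E] [NormedSpace ℝ E]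
    (u : ℝ → α → E) (t : ℝ) (x : α) : E :=
  deriv (fun s => u s x) t

/-- Spatial partial derivative in direction `i`. -/
def pd {E : Type*} [NormedAddCommGroup E] [NormedSpace ℝ E]
    (i : Fin n) (g : Rn n → E) (x : Rn n) : E :=
  fderiv ℝ g x (EuclideanSpace.single i 1)

/-- Laplacian. -/
def lap {E : Type*} [NormedAddCommGroup E] [NormedSpace ℝ E]
    (g : Rn n → E) (x : Rn n) : E :=
  ∑ i, pd i (fun y => pd i g y) x

/-- Sobolev norm `‖f; W_r^k‖` (with values in `ℝ≥0∞`). -/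
def sobN {E : Type*} [NormedAddCommGroup E] [NormedSpace ℝ E]
    (k : ℕ) (r : ℝ≥0∞) (f : Rn n → E) : ℝ≥0∞ :=
  ∑ i ∈ Finset.range (k + 1), eLpNorm (iteratedFDeriv ℝ i f) r volume

/-- Membership in the Sobolev space `W_r^k`. -/
def MemW {E : Type*} [NormedAddCommGroup E] [NormedSpace ℝ E]
    (k : ℕ) (r : ℝ≥0∞) (f : Rn n → E) : Prop :=
  ∀ i ≤ k, MemLp (iteratedFDeriv ℝ i f) r volume

/-- `L^q` norm in time on the set `J`. -/
def tLp (q : ℝ≥0∞) (J : Set ℝ) (g : ℝ → ℝ≥0∞) : ℝ≥0∞ :=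
  if q = ∞ then essSup g (volume.restrict J)
  else (∫⁻ s in J, g s ^ q.toReal) ^ (1 / q.toReal)

/-- The quantity whose supremum over `t ∈ I` is the `X(I)` norm. -/
def XNormAt (h : ℝ → ℝ) (I : Set ℝ) (v : ℝ → Rn n → ℂ) (B : ℝ → Rn n → ℝ) (t : ℝ) : ℝ≥0∞ :=
  ENNReal.ofReal (h t)⁻¹ *
    (sobN 2 2 (v t) + eLpNorm (dt v t) 2 volume
      + tLp ((8 : ℝ≥0∞) / (n : ℝ≥0∞)) (Ici t ∩ I) (fun s => sobN 2 4 (v s))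
      + tLp ((8 : ℝ≥0∞) / (n : ℝ≥0∞)) (Ici t ∩ I) (fun s => eLpNorm (dt v s) 4 volume)
      + sobN 1 2 (B t) + eLpNorm (dt B t) 2 volume)

/-- Membership of `(v, B)` in the space `X(I)`:
`(v,B) ∈ C(I, H²⊕H¹) ∩ C¹(I, L²⊕L²)` with finite `X(I)` norm. -/
def MemX (h : ℝ → ℝ) (I : Set ℝ) (v : ℝ → Rn n → ℂ) (B : ℝ → Rn n → ℝ) : Prop :=
  (∀ t ∈ I, Tendsto (fun s => sobN 2 2 (fun x => v s x - v t x)) (nhdsWithin t I) (nhds 0)) ∧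
  (∀ t ∈ I, Tendsto (fun s => sobN 1 2 (fun x => B s x - B t x)) (nhdsWithin t I) (nhds 0)) ∧
  (∀ t ∈ I, Tendsto (fun s => eLpNorm (fun x => dt v s x - dt v t x) 2 volume)
      (nhdsWithin t I) (nhds 0)) ∧
  (∀ t ∈ I, Tendsto (fun s => eLpNorm (fun x => dt B s x - dt B t x) 2 volume)
      (nhdsWithin t I) (nhds 0)) ∧
  (∀ t ∈ I, Tendsto (fun s => ENNReal.ofReal |s - t|⁻¹ *
      eLpNorm (fun x => v s x - v t x - (s - t) • dt v t x) 2 volume)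
      (nhdsWithin t (I \ {t})) (nhds 0)) ∧
  (∀ t ∈ I, Tendsto (fun s => ENNReal.ofReal |s - t|⁻¹ *
      eLpNorm (fun x => B s x - B t x - (s - t) • dt B t x) 2 volume)
      (nhdsWithin t (I \ {t})) (nhds 0)) ∧
  (⨆ t ∈ I, XNormAt h I v B t) < ∞

/-- `(u, A)` solves the Zakharov system on `I`. -/
def IsZakharov (I : Set ℝ) (u : ℝ → Rn n → ℂ) (A : ℝ → Rn n → ℝ) : Prop :=
  ∀ t ∈ I, ∀ x,
    Complex.I * dt u t x = -(1 / 2 : ℂ) * lap (u t) x + (A t x : ℂ) * u t x ∧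
    dt (dt A) t x - lap (A t) x = lap (fun y => Complex.normSq (u t y)) x

/-- The Schrödinger remainder `R₁ = i∂ₜu_a + (1/2)Δu_a − A_a u_a`. -/
def R1 (ua : ℝ → Rn n → ℂ) (Aa : ℝ → Rn n → ℝ) (t : ℝ) (x : Rn n) : ℂ :=
  Complex.I * dt ua t x + (1 / 2 : ℂ) * lap (ua t) x - (Aa t x : ℂ) * ua t x

/-- The wave remainder `R₂ = □A_a − Δ|u_a|²`. -/
def R2 (ua : ℝ → Rn n → ℂ) (Aa : ℝ → Rn n → ℝ) (t : ℝ) (x : Rn n) : ℝ :=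
  dt (dt Aa) t x - lap (Aa t) x - lap (fun y => Complex.normSq (ua t y)) x

/-- `(v, B)` solves the difference system (1.3) on `I`. -/
def IsPerturbedSol (I : Set ℝ) (ua : ℝ → Rn n → ℂ) (Aa : ℝ → Rn n → ℝ)
    (v : ℝ → Rn n → ℂ) (B : ℝ → Rn n → ℝ) : Prop :=
  ∀ t ∈ I, ∀ x,
    Complex.I * dt v t x = -(1 / 2 : ℂ) * lap (v t) x
        + ((Aa t x + B t x : ℝ) : ℂ) * v t x + ((B t x : ℝ) : ℂ) * ua t x - R1 ua Aa t x ∧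
    dt (dt B) t x - lap (B t) x
      = lap (fun y => Complex.normSq (v t y) + 2 * ((starRingEnd ℂ) (ua t y) * v t y).re) x
        - R2 ua Aa t x

/-- `h ∈ C([1,∞), ℝ⁺)` and `t^λ h(t)` is nonincreasing and tends to zero at infinity. -/
def HAdm (lam : ℝ) (h : ℝ → ℝ) : Prop :=
  ContinuousOn h (Ici 1) ∧ (∀ t, (1 : ℝ) ≤ t → 0 < h t) ∧
  AntitoneOn (fun t => t ^ lam * h t) (Ici 1) ∧
  Tendsto (fun t => t ^ lam * h t) atTop (nhds 0)

/-- `i`-th component of the Galilei operator `J = x + it∇` applied to `g`. -/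
def Jop (t : ℝ) (g : Rn n → ℂ) (i : Fin n) (x : Rn n) : ℂ :=
  ((x i : ℝ) : ℂ) * g x + Complex.I * (t : ℂ) * pd i g x

/-- Scaling operator `P = t∂ₜ + x·∇`. -/
def Pop (g : ℝ → Rn n → ℂ) (t : ℝ) (x : Rn n) : ℂ :=
  (t : ℂ) * dt g t x + ∑ i, ((x i : ℝ) : ℂ) * pd i (g t) x

/-- Admissible pair for the Strichartz inequality. -/
def Admissible (n : ℕ) (q r : ℝ≥0∞) : Prop :=
  2 ≤ q ∧ 2 ≤ r ∧ 2 / q = (n : ℝ≥0∞) / 2 - (n : ℝ≥0∞) / r ∧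
    (if n = 2 then 2 / q < 1 else 2 / q ≤ 1)

/-- Hölder conjugate exponent in `ℝ≥0∞`. -/
def conjE (p : ℝ≥0∞) : ℝ≥0∞ :=
  if p = 1 then ∞ else if p = ∞ then 1 else ENNReal.ofReal (p.toReal / (p.toReal - 1))

end Zakharov

open Zakharov

section Holder

variable {α : Type*} {m : MeasurableSpace α} {μ : Measure α}

lemma eLpNorm_finset_prod_le {ι : Type*} (s : Finset ι) {p : ι → ℝ≥0∞} {F : ι → α → ℝ}
    (hF : ∀ i ∈ s, AEStronglyMeasurable (F i) μ) :
    eLpNorm (fun x => ∏ i ∈ s, F i x) (∑ i ∈ s, (p i)⁻¹)⁻¹ μ ≤ ∏ i ∈ s, eLpNorm (F i) (p i) μ := by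
  induction s using Finset.cons_induction with
  | empty =>
    simpa using eLpNorm_le_of_ae_bound (p := ∞) (μ := μ) (f := fun _ : α => (1 : ℝ))
      (C := 1) (.of_forall fun _ => by simp)
  | cons i s hi ih =>
    simp_rw [Finset.prod_cons, Finset.sum_cons]
    refine (eLpNorm_smul_le_mul_eLpNorm (φ := F i) (f := fun x => ∏ j ∈ s, F j x)
      (p := p i) (q := (∑ j ∈ s, (p j)⁻¹)⁻¹)
      (Finset.aestronglyMeasurable_fun_prod _ fun j hj => hF j (Finset.mem_cons_of_mem hj))
      (hF i (Finset.mem_cons_self i s)) (hpqr := ⟨by simp⟩)).trans ?_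
    exact mul_le_mul_right (ih fun j hj => hF j (Finset.mem_cons_of_mem hj)) _

lemma eLpNorm_mul_prod_le {ι : Type*} [Fintype ι] {q p₀ : ℝ≥0∞} {p : ι → ℝ≥0∞} {w : α → ℝ}
    {F : ι → α → ℝ} (hpq : q⁻¹ = p₀⁻¹ + ∑ i, (p i)⁻¹) (hw : AEStronglyMeasurable w μ)
    (hF : ∀ i, AEStronglyMeasurable (F i) μ) :
    eLpNorm (fun x => w x * ∏ i, F i x) q μ ≤ eLpNorm w p₀ μ * ∏ i, eLpNorm (F i) (p i) μ :=
  (eLpNorm_smul_le_mul_eLpNorm (Finset.aestronglyMeasurable_fun_prod _ fun i _ => hF i) hw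
    (p := p₀) (q := (∑ i, (p i)⁻¹)⁻¹) (hpqr := ⟨by rw [inv_inv, hpq]⟩)).trans
    (mul_le_mul_right (eLpNorm_finset_prod_le _ fun i _ => hF i) _)

end Holder

lemma inv_eq_ofReal_add_sum_inv {ι : Type*} [Fintype ι] {q : ℝ≥0∞} {p : ι → ℝ≥0∞}
    (hq : q ≠ 0) (hp : ∀ i, p i ≠ 0) (hν : 0 ≤ (1 / q).toReal - ∑ i, (1 / p i).toReal) :
    q⁻¹ = ENNReal.ofReal ((1 / q).toReal - ∑ i, (1 / p i).toReal) + ∑ i, (p i)⁻¹ := by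
  have hsum : ∑ i, (p i)⁻¹ = ENNReal.ofReal (∑ i, (1 / p i).toReal) := by
    rw [ENNReal.ofReal_sum_of_nonneg fun i _ => ENNReal.toReal_nonneg]
    refine Finset.sum_congr rfl fun i _ => ?_
    rw [one_div, ENNReal.ofReal_toReal (ENNReal.inv_ne_top.2 (hp i))]
  rw [hsum, ← ENNReal.ofReal_add hν (Finset.sum_nonneg fun i _ => ENNReal.toReal_nonneg),
    sub_add_cancel, one_div, ENNReal.ofReal_toReal (ENNReal.inv_ne_top.2 hq)]

lemma prod_ofReal_le_ofReal_prod {ι : Type*} (s : Finset ι) (x : ι → ℝ) :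
    ∏ i ∈ s, ENNReal.ofReal (x i) ≤ ENNReal.ofReal (∏ i ∈ s, x i) := by
  by_cases hx : ∃ i ∈ s, x i < 0
  · obtain ⟨i, hi, hxi⟩ := hx
    rw [Finset.prod_eq_zero hi (ENNReal.ofReal_eq_zero.2 hxi.le)]
    exact zero_le
  · exact (ENNReal.ofReal_prod_of_nonneg fun i hi => not_lt.1 fun h => hx ⟨i, hi, h⟩).ge

lemma le_rpow_neg_mul_of_antitoneOn {h : ℝ → ℝ} {S : Set ℝ} {lam t c : ℝ}
    (hanti : AntitoneOn (fun s => s ^ lam * h s) S) (ht : t ∈ S) (hct : c * t ∈ S)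
    (ht₀ : 0 < t) (hc : 1 ≤ c) : h (c * t) ≤ c ^ (-lam) * h t := by
  have hc₀ : 0 < c := one_pos.trans_le hc
  have key : t ^ lam * (c ^ lam * h (c * t)) ≤ t ^ lam * h t := by
    have h_le : (c * t) ^ lam * h (c * t) ≤ t ^ lam * h t :=
      hanti ht hct (le_mul_of_one_le_left ht₀.le hc)
    rw [Real.mul_rpow hc₀.le ht₀.le] at h_le
    linarith
  rw [Real.rpow_neg hc₀.le, ← div_eq_inv_mul, le_div_iff₀' (by positivity)]
  exact le_of_mul_le_mul_left key (by positivity)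

lemma Ici_subset_iUnion_Ico_two_pow_mul {t : ℝ} (ht : 0 < t) :
    Ici t ⊆ ⋃ j : ℕ, Ico (2 ^ j * t) (2 * (2 ^ j * t)) := by
  intro s hs
  obtain ⟨j, hj, hj'⟩ := exists_nat_pow_near ((one_le_div ht).2 hs) one_lt_two
  refine mem_iUnion.2 ⟨j, (le_div_iff₀ ht).1 hj, ?_⟩
  rw [← mul_assoc, ← pow_succ']
  exact (div_lt_iff₀ ht).1 hj'

lemma eLpNorm_rpow_neg_restrict_Ico_le {ρ ν b : ℝ} (hρ : 0 ≤ ρ) (hν : 0 ≤ ν) (hb : 0 < b) :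
    eLpNorm (fun s : ℝ => s ^ (-ρ)) (ENNReal.ofReal ν)⁻¹ (volume.restrict (Ico b (2 * b)))
      ≤ ENNReal.ofReal (b ^ (ν - ρ)) := by
  have hbound : ∀ᵐ s ∂volume.restrict (Ico b (2 * b)), ‖s ^ (-ρ)‖ ≤ b ^ (-ρ) := by
    filter_upwards [ae_restrict_mem measurableSet_Ico] with s hs
    rw [Real.norm_of_nonneg (Real.rpow_nonneg (hb.trans_le hs.1).le _)]
    exact Real.rpow_le_rpow_of_nonpos hb hs.1 (neg_nonpos.2 hρ)
  refine (eLpNorm_le_of_ae_bound hbound).trans_eq ?_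
  rw [Measure.restrict_apply_univ, Real.volume_Ico, two_mul, add_sub_cancel_right,
    ENNReal.toReal_inv, ENNReal.toReal_ofReal hν, inv_inv, ENNReal.ofReal_rpow_of_pos hb,
    ← ENNReal.ofReal_mul (by positivity), ← Real.rpow_add hb, sub_eq_add_neg]

lemma eLpNorm_restrict_le_of_le_geometric {α E : Type*} [MeasurableSpace α] [NormedAddCommGroup E]
    {μ : Measure α} {g : α → E} {p : ℝ≥0∞} {S : Set α} {A : ℕ → Set α} (hS : S ⊆ ⋃ j, A j)
    {M : ℝ≥0∞} {r : ℝ} (hr₀ : 0 ≤ r) (hr₁ : r < 1)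
    (hA : ∀ j, eLpNorm g p (μ.restrict (A j)) ≤ M * ENNReal.ofReal (r ^ j)) :
    eLpNorm g p (μ.restrict S) ≤ ENNReal.ofReal ((1 - r ^ p.toReal) ^ (-(1 / p.toReal))) * M := by
  refine (eLpNorm_mono_measure g (Measure.restrict_mono hS le_rfl)).trans ?_
  rcases eq_or_ne p 0 with rfl | hp_ne_zero
  · simp
  rcases eq_or_ne p ∞ with rfl | hp_ne_top
  -- for `p = ∞` the constant is `0 ^ (-(1 / 0)) = 0 ^ 0 = 1`
  · simp only [eLpNorm_exponent_top] at hA ⊢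
    have hae : ∀ᵐ x ∂μ.restrict (⋃ j, A j), ‖g x‖ₑ ≤ M := by
      refine (ae_restrict_iUnion_iff _ _).2 fun j => ?_
      filter_upwards [ae_le_eLpNormEssSup (f := g) (μ := μ.restrict (A j))] with x hx
      exact hx.trans ((hA j).trans
        (mul_le_of_le_one_right' (ENNReal.ofReal_le_one.2 (pow_le_one₀ hr₀ hr₁.le))))
    simpa using eLpNormEssSup_le_of_ae_enorm_bound hae
  have hp_pos : 0 < p.toReal := ENNReal.toReal_pos hp_ne_zero hp_ne_top
  have hrp : 0 < 1 - r ^ p.toReal := sub_pos.2 (Real.rpow_lt_one hr₀ hr₁ hp_pos)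
  have hconst : ENNReal.ofReal ((1 - r ^ p.toReal) ^ (-(1 / p.toReal))) ^ p.toReal
      = (1 - ENNReal.ofReal (r ^ p.toReal))⁻¹ := by
    rw [ENNReal.ofReal_rpow_of_nonneg (by positivity) hp_pos.le, ← Real.rpow_mul hrp.le,
      neg_mul, one_div_mul_cancel hp_pos.ne', Real.rpow_neg_one, ENNReal.ofReal_inv_of_pos hrp,
      ENNReal.ofReal_sub _ (by positivity), ENNReal.ofReal_one]
  rw [eLpNorm_eq_lintegral_rpow_enorm_toReal hp_ne_zero hp_ne_top]
  conv_lhs => rw [one_div]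
  rw [ENNReal.rpow_inv_le_iff hp_pos]
  calc ∫⁻ x in ⋃ j, A j, ‖g x‖ₑ ^ p.toReal ∂μ
      ≤ ∑' j : ℕ, ∫⁻ x in A j, ‖g x‖ₑ ^ p.toReal ∂μ := lintegral_iUnion_le _ _
    _ ≤ ∑' j : ℕ, M ^ p.toReal * ENNReal.ofReal (r ^ p.toReal) ^ j := by
        refine ENNReal.tsum_le_tsum fun j => ?_
        have hj := ENNReal.rpow_le_rpow (hA j) hp_pos.le
        rwa [eLpNorm_eq_lintegral_rpow_enorm_toReal hp_ne_zero hp_ne_top, ← ENNReal.rpow_mul,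
          one_div_mul_cancel hp_pos.ne', ENNReal.rpow_one, ENNReal.mul_rpow_of_nonneg _ _ hp_pos.le,
          ENNReal.ofReal_rpow_of_nonneg (by positivity) hp_pos.le, ← Real.rpow_pow_comm hr₀,
          ENNReal.ofReal_pow (by positivity)] at hj
    _ = (ENNReal.ofReal ((1 - r ^ p.toReal) ^ (-(1 / p.toReal))) * M) ^ p.toReal := by
        rw [ENNReal.tsum_mul_left, ENNReal.tsum_geometric, ENNReal.mul_rpow_of_nonneg _ _ hp_pos.le,
          hconst, mul_comm]

lemma eLpNorm_restrict_Ico_inter_le {f h : ℝ → ℝ} {p : ℝ≥0∞} {I : Set ℝ} [I.OrdConnected]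
    {lam N t c : ℝ} (hanti : AntitoneOn (fun s => s ^ lam * h s) (Ici 1))
    (h_nonneg : ∀ s, 1 ≤ s → 0 ≤ h s)
    (hbd : ∀ s ∈ I, eLpNorm f p (volume.restrict (Ici s ∩ I)) ≤ ENNReal.ofReal (N * h s))
    (ht : t ∈ I) (ht₁ : 1 ≤ t) (hc : 1 ≤ c) :
    eLpNorm f p (volume.restrict (Ico (c * t) (2 * (c * t)) ∩ I))
      ≤ ENNReal.ofReal (N * (c ^ (-lam) * h t)) := by
  have ht₀ : 0 < t := one_pos.trans_le ht₁
  have hct : t ≤ c * t := le_mul_of_one_le_left ht₀.le hc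
  rcases (Ico (c * t) (2 * (c * t)) ∩ I).eq_empty_or_nonempty with hA | ⟨s, hs, hsI⟩
  · simp [hA]
  have hctI : c * t ∈ I := Set.OrdConnected.out ‹_› ht hsI ⟨hct, hs.1⟩
  have hdecay : h (c * t) ≤ c ^ (-lam) * h t :=
    le_rpow_neg_mul_of_antitoneOn hanti ht₁ (ht₁.trans hct) ht₀ hc
  calc eLpNorm f p (volume.restrict (Ico (c * t) (2 * (c * t)) ∩ I))
      ≤ eLpNorm f p (volume.restrict (Ici (c * t) ∩ I)) :=
        eLpNorm_mono_measure _ (Measure.restrict_mono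
          (inter_subset_inter_left _ Ico_subset_Ici_self) le_rfl)
    _ ≤ ENNReal.ofReal (N * h (c * t)) := hbd _ hctI
    _ ≤ ENNReal.ofReal (N * (c ^ (-lam) * h t)) := by
      rw [ENNReal.ofReal_le_ofReal_iff']
      rcases le_or_gt 0 N with hN | hN
      · exact Or.inl (mul_le_mul_of_nonneg_left hdecay hN)
      · exact Or.inr (mul_nonpos_of_nonpos_of_nonneg hN.le (h_nonneg _ (ht₁.trans hct)))

lemma eLpNorm_rpow_neg_mul_prod_le {ι : Type*} [Fintype ι] {F : ι → ℝ → ℝ} {q : ℝ≥0∞}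
    {p : ι → ℝ≥0∞} {ρ ν b : ℝ} (hρ : 0 ≤ ρ) (hν : 0 ≤ ν) (hb : 0 < b)
    (hpq : q⁻¹ = ENNReal.ofReal ν + ∑ i, (p i)⁻¹) {A : Set ℝ} (hA : A ⊆ Ico b (2 * b))
    (hF : ∀ i, AEStronglyMeasurable (F i) (volume.restrict A)) :
    eLpNorm (fun s => s ^ (-ρ) * ∏ i, F i s) q (volume.restrict A)
      ≤ ENNReal.ofReal (b ^ (ν - ρ)) * ∏ i, eLpNorm (F i) (p i) (volume.restrict A) := by
  refine (eLpNorm_mul_prod_le (p₀ := (ENNReal.ofReal ν)⁻¹) (by rw [inv_inv, hpq])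
    (Measurable.aestronglyMeasurable (by fun_prop)) hF).trans ?_
  gcongr
  exact (eLpNorm_mono_measure _ (Measure.restrict_mono hA le_rfl)).trans
    (eLpNorm_rpow_neg_restrict_Ico_le hρ hν hb)

lemma two_pow_mul_rpow_mul_prod_eq {n : ℕ} (N : Fin n → ℝ) (j : ℕ) {t H lam ν : ℝ}
    (ht : 0 < t) :
    (2 ^ j * t) ^ ν * ∏ k, (N k * ((2 ^ j) ^ (-lam) * H))
      = (∏ k, N k) * H ^ n * t ^ ν * (2 ^ (-(n * lam - ν))) ^ j := by
  have hx : (0 : ℝ) < 2 ^ j := by positivity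
  have key : ((2 : ℝ) ^ j) ^ ν * (((2 : ℝ) ^ j) ^ (-lam)) ^ n = (2 ^ (-(n * lam - ν))) ^ j := by
    rw [← Real.rpow_mul_natCast hx.le, ← Real.rpow_add hx, Real.rpow_pow_comm zero_le_two]
    ring_nf
  rw [Finset.prod_mul_distrib, Finset.prod_mul_distrib, Finset.prod_const, Finset.prod_const,
    Finset.card_univ, Fintype.card_fin, Real.mul_rpow hx.le ht.le, ← key]
  ring

lemma eLpNorm_rpow_neg_mul_prod_restrict_dyadic_le {n : ℕ} {I : Set ℝ} [I.OrdConnected]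
    {f : Fin n → ℝ → ℝ} {h : ℝ → ℝ} {q : ℝ≥0∞} {qk : Fin n → ℝ≥0∞} {N : Fin n → ℝ}
    {lam ρ ν t : ℝ} (hanti : AntitoneOn (fun s => s ^ lam * h s) (Ici 1))
    (h_nonneg : ∀ s, 1 ≤ s → 0 ≤ h s) (hρ : 0 ≤ ρ) (hν : 0 ≤ ν)
    (hpq : q⁻¹ = ENNReal.ofReal ν + ∑ k, (qk k)⁻¹)
    (hf : ∀ k, AEStronglyMeasurable (f k) (volume.restrict I))
    (hbd : ∀ k, ∀ s ∈ I,
      eLpNorm (f k) (qk k) (volume.restrict (Ici s ∩ I)) ≤ ENNReal.ofReal (N k * h s))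
    (ht : t ∈ I) (ht₁ : 1 ≤ t) (j : ℕ) :
    eLpNorm (fun s => s ^ (-ρ) * ∏ k, f k s) q
        (volume.restrict (Ico (2 ^ j * t) (2 * (2 ^ j * t)) ∩ I))
      ≤ ENNReal.ofReal ((∏ k, N k) * h t ^ n * t ^ (ν - ρ)) *
          ENNReal.ofReal ((2 ^ (-(n * lam - (ν - ρ)))) ^ j) := by
  have ht₀ : 0 < t := one_pos.trans_le ht₁
  calc _ ≤ ENNReal.ofReal ((2 ^ j * t) ^ (ν - ρ)) *
          ∏ k, eLpNorm (f k) (qk k) (volume.restrict (Ico (2 ^ j * t) (2 * (2 ^ j * t)) ∩ I)) :=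
        eLpNorm_rpow_neg_mul_prod_le hρ hν (by positivity) hpq inter_subset_left
          fun k => (hf k).mono_measure (Measure.restrict_mono inter_subset_right le_rfl)
    _ ≤ ENNReal.ofReal ((2 ^ j * t) ^ (ν - ρ)) *
          ∏ k, ENNReal.ofReal (N k * ((2 ^ j) ^ (-lam) * h t)) := by
        gcongr with k
        exact eLpNorm_restrict_Ico_inter_le hanti h_nonneg (hbd k) ht ht₁
          (one_le_pow₀ one_le_two)
    _ ≤ ENNReal.ofReal ((2 ^ j * t) ^ (ν - ρ) * ∏ k, (N k * ((2 ^ j) ^ (-lam) * h t))) := by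
        rw [ENNReal.ofReal_mul (by positivity)]
        exact mul_le_mul_right (prod_ofReal_le_ofReal_prod _ _) _
    _ = _ := by
        rw [two_pow_mul_rpow_mul_prod_eq N j ht₀, ENNReal.ofReal_mul' (by positivity)]

theorem product_time_estimate_general
    (n : ℕ) (T : ℝ) (t0 : ℝ≥0∞) (hT : 1 ≤ T)
    (lam : ℝ) (h : ℝ → ℝ) (hadm : HAdm lam h)
    (q : ℝ≥0∞) (qk : Fin n → ℝ≥0∞) (hq : 1 ≤ q) (hqk : ∀ k, 1 ≤ qk k)
    (f : Fin n → ℝ → ℝ) (N : Fin n → ℝ) (ρ : ℝ) (hρ : 0 ≤ ρ)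
    (hμ : (0 : ℝ) ≤ (1 / q).toReal - ∑ k, (1 / qk k).toReal)
    (hbig : (1 / q).toReal - ∑ k, (1 / qk k).toReal < (n : ℝ) * lam + ρ)
    (hfk : ∀ k, MemLp (f k) (qk k)
      (volume.restrict {s : ℝ | T ≤ s ∧ ENNReal.ofReal s < t0}))
    (hbd : ∀ k, ∀ t ∈ {s : ℝ | T ≤ s ∧ ENNReal.ofReal s < t0},
      eLpNorm (f k) (qk k)
          (volume.restrict (Ici t ∩ {s : ℝ | T ≤ s ∧ ENNReal.ofReal s < t0}))
        ≤ ENNReal.ofReal (N k * h t)) :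
    ∀ t ∈ {s : ℝ | T ≤ s ∧ ENNReal.ofReal s < t0},
      eLpNorm (fun s : ℝ => s ^ (-ρ) * ∏ k, f k s) q
          (volume.restrict (Ici t ∩ {s : ℝ | T ≤ s ∧ ENNReal.ofReal s < t0}))
        ≤ ENNReal.ofReal
            ((1 - 2 ^ (-(q.toReal *
                ((n : ℝ) * lam + ρ - ((1 / q).toReal - ∑ k, (1 / qk k).toReal))))) ^
                (-(1 / q.toReal)) *
              (∏ k, N k) * h t ^ (n : ℕ) *
              t ^ (((1 / q).toReal - ∑ k, (1 / qk k).toReal) - ρ)) := by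
  intro t ht
  obtain ⟨-, hpos, hanti, -⟩ := hadm
  set I : Set ℝ := {s : ℝ | T ≤ s ∧ ENNReal.ofReal s < t0}
  set ν := (1 / q).toReal - ∑ k, (1 / qk k).toReal
  have : I.OrdConnected := ⟨fun x hx y hy z hz =>
    ⟨hx.1.trans hz.1, (ENNReal.ofReal_le_ofReal hz.2).trans_lt hy.2⟩⟩
  have ht₁ : 1 ≤ t := hT.trans ht.1
  have ht₀ : 0 < t := one_pos.trans_le ht₁
  have hpq := inv_eq_ofReal_add_sum_inv (one_pos.trans_le hq).ne'
    (fun k => (one_pos.trans_le (hqk k)).ne') hμ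
  have hr : (2 : ℝ) ^ (-(n * lam - (ν - ρ))) < 1 :=
    Real.rpow_lt_one_of_one_lt_of_neg one_lt_two (by linarith)
  have hcover : Ici t ∩ I ⊆ ⋃ j : ℕ, Ico (2 ^ j * t) (2 * (2 ^ j * t)) ∩ I :=
    iUnion_inter I _ ▸ inter_subset_inter_left _ (Ici_subset_iUnion_Ico_two_pow_mul ht₀)
  refine (eLpNorm_restrict_le_of_le_geometric hcover (by positivity) hr fun j =>
    eLpNorm_rpow_neg_mul_prod_restrict_dyadic_le hanti (fun s hs => (hpos s hs).le) hρ hμ hpq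
      (fun k => (hfk k).1) hbd ht ht₁ j).trans_eq ?_
  rw [← ENNReal.ofReal_mul (Real.rpow_nonneg
    (sub_nonneg.2 (Real.rpow_le_one (by positivity) hr.le ENNReal.toReal_nonneg)) _),
    ← Real.rpow_mul zero_le_two]
  congr 1
  ring_nf

/-- Lemma 2.2: weighted product estimate in time on `I = [T, t₀)`. -/
theorem product_time_estimate
    (n : ℕ) (T : ℝ) (t0 : ℝ≥0∞) (hT : 1 ≤ T) (hTt0 : ENNReal.ofReal T < t0)
    (lam : ℝ) (hlam : 0 < lam) (h : ℝ → ℝ) (hadm : HAdm lam h)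
    (q : ℝ≥0∞) (qk : Fin n → ℝ≥0∞) (hq : 1 ≤ q) (hqk : ∀ k, 1 ≤ qk k)
    (f : Fin n → ℝ → ℝ) (N : Fin n → ℝ) (ρ : ℝ) (hρ : 0 ≤ ρ)
    (hμ : (0 : ℝ) ≤ (1 / q).toReal - ∑ k, (1 / qk k).toReal)
    (hbig : (1 / q).toReal - ∑ k, (1 / qk k).toReal < (n : ℝ) * lam + ρ)
    (hfk : ∀ k, MemLp (f k) (qk k)
      (volume.restrict {s : ℝ | T ≤ s ∧ ENNReal.ofReal s < t0}))
    (hbd : ∀ k, ∀ t ∈ {s : ℝ | T ≤ s ∧ ENNReal.ofReal s < t0},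
      eLpNorm (f k) (qk k)
          (volume.restrict (Ici t ∩ {s : ℝ | T ≤ s ∧ ENNReal.ofReal s < t0}))
        ≤ ENNReal.ofReal (N k * h t)) :
    ∀ t ∈ {s : ℝ | T ≤ s ∧ ENNReal.ofReal s < t0},
      eLpNorm (fun s : ℝ => s ^ (-ρ) * ∏ k, f k s) q
          (volume.restrict (Ici t ∩ {s : ℝ | T ≤ s ∧ ENNReal.ofReal s < t0}))
        ≤ ENNReal.ofReal
            ((1 - 2 ^ (-(q.toReal *
                ((n : ℝ) * lam + ρ - ((1 / q).toReal - ∑ k, (1 / qk k).toReal))))) ^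
                (-(1 / q.toReal)) *
              (∏ k, N k) * h t ^ (n : ℕ) *
              t ^ (((1 / q).toReal - ∑ k, (1 / qk k).toReal) - ρ)) :=
  product_time_estimate_general n T t0 hT lam h hadm q qk hq hqk f N ρ hρ hμ hbig hfk hbd
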